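/- Let n ≥ 3 and let S ⊆ {1,…,n} satisfy p(S) ≺ 0 or 0 ≺ p(S). Then there exists a subset S' of {1,…,n} with S' ≠ S and S' ≠ {1,…,n}∖S such that |p(S')·c| ≤ |p(S)·c| for every vector c ∈ ℤ^n with c_1 ≥ c_2 ≥ ⋯ ≥ c_n ≥ 0. -/
import Mathlib

open Finset

/-- Cumulative sum: `x 0 + ... + x k`. -/
def cum {n : ℕ} (x : Fin n → ℤ) (k : Fin n) : ℤ := ∑ i ∈ Finset.Iic k, x i

/-- The partial order `⪯`: every partial sum of `x` is at most that of `y`. -/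
def ple {n : ℕ} (x y : Fin n → ℤ) : Prop := ∀ k : Fin n, cum x k ≤ cum y k

/-- Membership in `P(n)`: all entries are `1` or `-1`. -/
def isPM {n : ℕ} (v : Fin n → ℤ) : Prop := ∀ i, v i = 1 ∨ v i = -1

/-- Membership in `Q(n)`. -/
def inQ {n : ℕ} (v : Fin n → ℤ) : Prop := isPM v ∧ ¬ ple v 0 ∧ ¬ ple 0 v

/-- Standard inner product on `ℤ^n`. -/
def dotp {n : ℕ} (x y : Fin n → ℤ) : ℤ := ∑ i, x i * y i

/-- The ±1 vector of a subset `S`. -/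
def pS {n : ℕ} (S : Finset (Fin n)) : Fin n → ℤ := fun i => if i ∈ S then 1 else -1

/-- The vector `m_k`: first `k` entries 1, next `k+1` entries −1, rest 1 (0-indexed). -/
def mvec (n k : ℕ) : Fin n → ℤ := fun i => if i.val < k then 1 else if i.val < 2 * k + 1 then -1 else 1

/-- An instance of the partition problem: `c_1 ≥ c_2 ≥ ⋯ ≥ c_n ≥ 0`. -/
def monoc {n : ℕ} (c : Fin n → ℤ) : Prop := (∀ i j : Fin n, i ≤ j → c j ≤ c i) ∧ ∀ i, 0 ≤ c i

/-- Extension of a `Fin n`-vector to `ℕ` by zero. -/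
def extZ {n : ℕ} (x : Fin n → ℤ) : ℕ → ℤ := fun i => if h : i < n then x ⟨i, h⟩ else 0

lemma cum_eq {n : ℕ} (x : Fin n → ℤ) (k : Fin n) :
    cum x k = ∑ i ∈ Finset.range (k.val + 1), extZ x i := by
  unfold cum
  rw [Finset.sum_nbij' (i := fun (a : Fin n) => a.val)
    (j := fun (b : ℕ) => (⟨b % n, Nat.mod_lt b k.pos⟩ : Fin n)) (f := x) (g := extZ x)]
  · intro a ha
    simp only [mem_Iic] at ha
    simp only [mem_range]
    omega
  · intro b hb
    simp only [mem_range] at hb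
    simp only [mem_Iic]
    have hbn : b < n := by omega
    have : b % n = b := Nat.mod_eq_of_lt hbn
    exact Fin.mk_le_of_le_val (by omega)
  · intro a ha
    have : a.val % n = a.val := Nat.mod_eq_of_lt a.isLt
    exact Fin.ext (by simp [this])
  · intro b hb
    simp only [mem_range] at hb
    have hbn : b < n := by omega
    simp [Nat.mod_eq_of_lt hbn]
  · intro a ha
    simp [extZ, a.isLt]

lemma dotp_eq {n : ℕ} (x c : Fin n → ℤ) :
    dotp x c = ∑ i ∈ Finset.range n, extZ x i * extZ c i := by
  unfold dotp
  rw [← Fin.sum_univ_eq_sum_range (fun i => extZ x i * extZ c i) n]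
  apply Finset.sum_congr rfl
  intro a _
  simp [extZ, a.isLt]

/-- Abel-summation positivity in ℕ-indexed form. -/
lemma nat_abel : ∀ (n : ℕ) (d c : ℕ → ℤ),
    (∀ i j : ℕ, i ≤ j → c j ≤ c i) → (∀ i, 0 ≤ c i) →
    (∀ k, k < n → 0 ≤ ∑ i ∈ Finset.range (k + 1), d i) →
    0 ≤ ∑ i ∈ Finset.range n, d i * c i := by
  intro n
  induction n with
  | zero => intro d c _ _ _; simp
  | succ n ih =>
    intro d c hmono hpos hps
    set e : ℕ → ℤ := fun i => c (min i n) - c n with he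
    have step : ∀ i ∈ Finset.range (n + 1), d i * c i = d i * e i + d i * c n := by
      intro i hi
      simp only [mem_range] at hi
      have : min i n = i := by omega
      simp [he, this]
      ring
    rw [Finset.sum_congr rfl step, Finset.sum_add_distrib, ← Finset.sum_mul]
    have h1 : 0 ≤ ∑ i ∈ Finset.range (n + 1), d i * e i := by
      rw [Finset.sum_range_succ]
      have hen : e n = by exact c (min n n) - c n := rfl
      have : e n = 0 := by simp [he]
      rw [this, mul_zero, add_zero]
      apply ih d e
      · intro i j hij
        simp only [he]
        have : min i n ≤ min j n := by omega
        have := hmono _ _ this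
        linarith [hmono (min i n) (min j n) (by omega)]
      · intro i
        simp only [he]
        have := hmono (min i n) n (by omega)
        linarith
      · intro k hk
        exact hps k (by omega)
    have h2 : 0 ≤ (∑ i ∈ Finset.range (n + 1), d i) * c n :=
      mul_nonneg (hps n (by omega)) (hpos n)
    linarith

lemma extZ_mono {n : ℕ} (c : Fin n → ℤ) (hc : monoc c) :
    (∀ i j : ℕ, i ≤ j → extZ c j ≤ extZ c i) ∧ (∀ i, 0 ≤ extZ c i) := by
  constructor
  · intro i j hij
    unfold extZ
    split
    · split
      · exact hc.1 _ _ (by exact Fin.mk_le_mk.mpr hij)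
      · omega
    · split
      · exact hc.2 _
      · exact le_refl _
  · intro i
    unfold extZ
    split
    · exact hc.2 _
    · exact le_refl _

/-- Monotonicity of dot products w.r.t. the partial order, against monotone nonneg `c`. -/
lemma dotp_mono {n : ℕ} (u v c : Fin n → ℤ) (huv : ple u v) (hc : monoc c) :
    dotp u c ≤ dotp v c := by
  have key := nat_abel n (fun i => extZ v i - extZ u i) (extZ c)
    (extZ_mono c hc).1 (extZ_mono c hc).2 ?_
  · rw [dotp_eq u c, dotp_eq v c]
    have : ∑ i ∈ Finset.range n, (extZ v i - extZ u i) * extZ c i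
        = ∑ i ∈ Finset.range n, extZ v i * extZ c i
          - ∑ i ∈ Finset.range n, extZ u i * extZ c i := by
      rw [← Finset.sum_sub_distrib]
      apply Finset.sum_congr rfl
      intro i _
      ring
    linarith [key, this ▸ key]
  · intro k hk
    have := huv ⟨k, hk⟩
    rw [cum_eq, cum_eq] at this
    rw [Finset.sum_sub_distrib]
    simpa using this

lemma cum_neg {n : ℕ} (v : Fin n → ℤ) (k : Fin n) :
    cum (fun i => -v i) k = -cum v k := by
  unfold cum
  rw [← Finset.sum_neg_distrib]

lemma dotp_neg {n : ℕ} (v c : Fin n → ℤ) :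
    dotp (fun i => -v i) c = -dotp v c := by
  unfold dotp
  rw [← Finset.sum_neg_distrib]
  apply Finset.sum_congr rfl
  intro i _; ring

/-- Sandwich: if `-v ⪯ u ⪯ v` then `|u·c| ≤ |v·c|`. -/
lemma sandwich {n : ℕ} (u v : Fin n → ℤ) (h1 : ple u v) (h2 : ple (fun i => -v i) u)
    (c : Fin n → ℤ) (hc : monoc c) : |dotp u c| ≤ |dotp v c| := by
  have hu := dotp_mono u v c h1 hc
  have hl := dotp_mono (fun i => -v i) u c h2 hc
  rw [dotp_neg] at hl
  have hv : 0 ≤ dotp v c := by linarith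
  rw [abs_of_nonneg hv]
  exact abs_le.mpr ⟨by linarith, hu⟩

/-- The set of even positions. -/
def Aset (n : ℕ) : Finset (Fin n) := Finset.univ.filter (fun i => i.val % 2 = 0)

/-- Even positions except 0, plus position 1. -/
def Bset (n : ℕ) : Finset (Fin n) :=
  Finset.univ.filter (fun i => (i.val % 2 = 0 ∧ i.val ≠ 0) ∨ i.val = 1)

lemma mem_Aset {n : ℕ} (i : Fin n) : i ∈ Aset n ↔ i.val % 2 = 0 := by
  simp [Aset]

lemma mem_Bset {n : ℕ} (i : Fin n) :
    i ∈ Bset n ↔ ((i.val % 2 = 0 ∧ i.val ≠ 0) ∨ i.val = 1) := by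
  simp [Bset]

lemma isPM_pS {n : ℕ} (S : Finset (Fin n)) : isPM (pS S) := by
  intro i
  unfold pS
  split <;> simp

/-- partial sums of ±1 vectors have parity m. -/
lemma pm_parity {n : ℕ} (x : Fin n → ℤ) (hx : isPM x) :
    ∀ m, m ≤ n → (∑ i ∈ Finset.range m, extZ x i) % 2 = (m : ℤ) % 2 := by
  intro m
  induction m with
  | zero => simp
  | succ m ih =>
    intro hm
    rw [Finset.sum_range_succ]
    have h1 := ih (by omega)
    have h2 : extZ x m = 1 ∨ extZ x m = -1 := by
      unfold extZ
      rw [dif_pos (by omega : m < n)]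
      exact hx _
    push_cast
    omega

lemma sumA {n : ℕ} : ∀ m, m ≤ n →
    ∑ i ∈ Finset.range m, extZ (pS (Aset n)) i = if m % 2 = 0 then 0 else 1 := by
  intro m
  induction m with
  | zero => simp
  | succ m ih =>
    intro hm
    rw [Finset.sum_range_succ, ih (by omega)]
    have hterm : extZ (pS (Aset n)) m = if m % 2 = 0 then 1 else -1 := by
      unfold extZ
      rw [dif_pos (by omega : m < n)]
      unfold pS
      by_cases h : (⟨m, by omega⟩ : Fin n) ∈ Aset n
      · rw [if_pos h, if_pos ((mem_Aset _).mp h)]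
      · rw [if_neg h, if_neg (fun hc => h ((mem_Aset _).mpr hc))]
    rw [hterm]
    rcases Nat.even_or_odd m with he | ho
    · have h0 : m % 2 = 0 := Nat.even_iff.mp he
      have h1 : (m+1) % 2 = 1 := by omega
      simp [h0, h1]
    · have h0 : m % 2 = 1 := Nat.odd_iff.mp ho
      have h1 : (m+1) % 2 = 0 := by omega
      simp [h0, h1]

lemma sumB {n : ℕ} : ∀ m, m ≤ n →
    ∑ i ∈ Finset.range m, extZ (pS (Bset n)) i =
      if m = 0 then 0 else if m = 1 then -1 else if m % 2 = 0 then 0 else 1 := by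
  intro m
  induction m with
  | zero => simp
  | succ m ih =>
    intro hm
    rw [Finset.sum_range_succ, ih (by omega)]
    have hterm : extZ (pS (Bset n)) m =
        if m = 0 then -1 else if m = 1 then 1 else if m % 2 = 0 then 1 else -1 := by
      unfold extZ
      rw [dif_pos (by omega : m < n)]
      unfold pS
      by_cases h : (⟨m, by omega⟩ : Fin n) ∈ Bset n
      · rw [if_pos h]
        have := (mem_Bset _).mp h
        simp only at this
        rcases this with ⟨h2, h3⟩ | h1
        · rw [if_neg h3, if_neg (by omega), if_pos h2]
        · rw [if_neg (by omega), if_pos h1]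
      · rw [if_neg h]
        have := fun hc => h ((mem_Bset _).mpr hc)
        simp only at this
        by_cases h0 : m = 0
        · simp [h0]
        · rw [if_neg h0]
          by_cases h1 : m = 1
          · exact absurd (Or.inr h1) this
          · rw [if_neg h1, if_neg (fun hc => this (Or.inl ⟨hc, h0⟩))]
    rw [hterm]
    rcases Nat.even_or_odd m with he | ho
    · have h0 : m % 2 = 0 := Nat.even_iff.mp he
      by_cases hm0 : m = 0
      · subst hm0; norm_num
      · have h1 : (m+1) % 2 = 1 := by omega
        have : ¬ (m + 1 = 0) := by omega
        have hne1 : ¬ (m + 1 = 1) := by omega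
        simp [h0, h1, hm0, this, hne1, show m ≠ 1 by omega]
    · have h0 : m % 2 = 1 := Nat.odd_iff.mp ho
      have h1 : (m+1) % 2 = 0 := by omega
      by_cases hm1 : m = 1
      · subst hm1; norm_num
      · simp [show m % 2 ≠ 0 by omega, h1, hm1, show m ≠ 0 by omega,
          show m + 1 ≠ 0 by omega, show m + 1 ≠ 1 by omega]

lemma cum_zero {n : ℕ} (k : Fin n) : cum (0 : Fin n → ℤ) k = 0 := by
  simp [cum]

lemma cumA {n : ℕ} (k : Fin n) :
    cum (pS (Aset n)) k = if k.val % 2 = 0 then 1 else 0 := by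
  rw [cum_eq, sumA (k.val + 1) (by omega)]
  rcases Nat.even_or_odd k.val with he | ho
  · have h0 : k.val % 2 = 0 := Nat.even_iff.mp he
    simp [h0, show (k.val + 1) % 2 = 1 by omega]
  · have h0 : k.val % 2 = 1 := Nat.odd_iff.mp ho
    simp [h0, show (k.val + 1) % 2 = 0 by omega]

lemma cumB {n : ℕ} (k : Fin n) :
    cum (pS (Bset n)) k =
      if k.val = 0 then -1 else if k.val % 2 = 0 then 1 else 0 := by
  rw [cum_eq, sumB (k.val + 1) (by omega)]
  by_cases h0 : k.val = 0
  · simp [h0]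
  · rw [if_neg (by omega), if_neg (by omega : ¬ (k.val + 1 = 1)), if_neg h0]
    rcases Nat.even_or_odd k.val with he | ho
    · have hp : k.val % 2 = 0 := Nat.even_iff.mp he
      simp [hp, show (k.val + 1) % 2 = 1 by omega]
    · have hp : k.val % 2 = 1 := Nat.odd_iff.mp ho
      simp [hp, show (k.val + 1) % 2 = 0 by omega]

lemma helper {n : ℕ} (hn : 3 ≤ n) (S : Finset (Fin n)) (h0 : ple 0 (pS S)) :
    ∃ S' : Finset (Fin n), S' ≠ S ∧ S' ≠ Sᶜ ∧
      ∀ c : Fin n → ℤ, monoc c → |dotp (pS S') c| ≤ |dotp (pS S) c| := by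
  have hnn : 0 < n := by omega
  have hcumS : ∀ k : Fin n, 0 ≤ cum (pS S) k := by
    intro k
    have := h0 k
    rwa [cum_zero] at this
  have hparS : ∀ k : Fin n, cum (pS S) k % 2 = ((k.val : ℤ) + 1) % 2 := by
    intro k
    rw [cum_eq]
    have := pm_parity (pS S) (isPM_pS S) (k.val + 1) (by omega)
    rw [this]
    push_cast
    ring_nf
  -- `pS S` starts with 1
  have hS0 : (⟨0, hnn⟩ : Fin n) ∈ S := by
    by_contra hc
    have h1 := hcumS ⟨0, hnn⟩
    rw [cum_eq] at h1
    simp only [Fin.val_mk, zero_add, Finset.sum_range_one] at h1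
    unfold extZ at h1
    rw [dif_pos hnn] at h1
    unfold pS at h1
    rw [if_neg hc] at h1
    omega
  -- A is below S in the order, and -S below A
  have hAS : ple (pS (Aset n)) (pS S) := by
    intro k
    rw [cumA]
    have h1 := hcumS k
    have h2 := hparS k
    rcases Nat.even_or_odd k.val with he | ho
    · have hp : k.val % 2 = 0 := Nat.even_iff.mp he
      rw [if_pos hp]
      have : ((k.val : ℤ) + 1) % 2 = 1 := by omega
      omega
    · have hp : k.val % 2 = 1 := Nat.odd_iff.mp ho
      rw [if_neg (by omega)]
      exact h1
  have hSA : ple (fun i => -(pS S) i) (pS (Aset n)) := by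
    intro k
    rw [cum_neg, cumA]
    have h1 := hcumS k
    split <;> omega
  by_cases hSeq : S = Aset n
  · -- use Bset
    refine ⟨Bset n, ?_, ?_, ?_⟩
    · intro hc
      have h0B : (⟨0, hnn⟩ : Fin n) ∉ Bset n := by
        rw [mem_Bset]
        simp
      rw [hc, hSeq] at h0B
      exact h0B ((mem_Aset _).mpr rfl)
    · intro hc
      have h2B : (⟨2, by omega⟩ : Fin n) ∈ Bset n := by
        rw [mem_Bset]; exact Or.inl ⟨by norm_num, by norm_num⟩
      rw [hc, Finset.mem_compl, hSeq] at h2B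
      exact h2B ((mem_Aset _).mpr (by norm_num))
    · intro c hc
      apply sandwich _ _ ?_ ?_ c hc
      · -- ple (pS (Bset n)) (pS S)
        intro k
        rw [cumB]
        rw [hSeq, cumA]
        by_cases hk0 : k.val = 0
        · simp [hk0]
        · rw [if_neg hk0]
      · intro k
        rw [cum_neg, cumB, hSeq, cumA]
        by_cases hk0 : k.val = 0
        · simp [hk0]
        · rw [if_neg hk0]
          split <;> norm_num
  · -- use Aset
    refine ⟨Aset n, fun hc => hSeq hc.symm, ?_, ?_⟩
    · intro hc
      have : (⟨0, hnn⟩ : Fin n) ∈ Aset n := (mem_Aset _).mpr rfl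
      rw [hc, Finset.mem_compl] at this
      exact this hS0
    · intro c hc
      exact sandwich _ _ hAS hSA c hc

lemma pS_compl {n : ℕ} (S : Finset (Fin n)) : pS Sᶜ = fun i => -(pS S i) := by
  funext i
  unfold pS
  by_cases h : i ∈ S
  · rw [if_pos h, if_neg (by simpa using h)]
  · rw [if_neg h, if_pos (by simpa using h)]
    norm_num

theorem stmt13 {n : ℕ} (hn : 3 ≤ n) (S : Finset (Fin n))
    (h : (ple (pS S) 0 ∧ pS S ≠ 0) ∨ (ple 0 (pS S) ∧ (0 : Fin n → ℤ) ≠ pS S)) :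
    ∃ S' : Finset (Fin n), S' ≠ S ∧ S' ≠ Sᶜ ∧
      ∀ c : Fin n → ℤ, monoc c → |dotp (pS S') c| ≤ |dotp (pS S) c| := by
  rcases h with ⟨h1, -⟩ | ⟨h1, -⟩
  · -- pS S ⪯ 0: apply helper to Sᶜ
    have h0 : ple 0 (pS Sᶜ) := by
      intro k
      rw [cum_zero, pS_compl, cum_neg]
      have := h1 k
      rw [cum_zero] at this
      omega
    obtain ⟨S', hS1, hS2, hS3⟩ := helper hn Sᶜ h0
    refine ⟨S', by simpa using hS2, hS1, ?_⟩
    intro c hc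
    have := hS3 c hc
    rwa [pS_compl, dotp_neg, abs_neg] at this
  · exact helper hn S h1
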